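/- Let E : Fin N × Fin D → Fin M be a bipartite multigraph and K an integer with 0 < K ≤ N. If for every set S of left vertices with #S exactly equal to K and every set Y of right vertices one has |#E(S,Y)/(D·#S) − #Y/M| < ε, then the same inequality holds for every set S of left vertices with #S ≥ K and every set Y of right vertices; that is, E is a (K, ε)-extractor. -/
import Mathlib

open Finset

def edgeCount {N D M : ℕ} (E : Fin N × Fin D → Fin M)
    (S : Finset (Fin N)) (Y : Finset (Fin M)) : ℕ :=
  ((S ×ˢ (univ : Finset (Fin D))).filter (fun p => E p ∈ Y)).card

lemma edgeCount_eq_sum {N D M : ℕ} (E : Fin N × Fin D → Fin M)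
    (S : Finset (Fin N)) (Y : Finset (Fin M)) :
    edgeCount E S Y = ∑ x ∈ S, (univ.filter (fun i => E (x, i) ∈ Y)).card := by
  unfold edgeCount
  rw [Finset.card_filter, Finset.sum_product]
  exact Finset.sum_congr rfl fun x _ => (Finset.card_filter _ _).symm

lemma card_filter_mem_powersetCard {α : Type*} [DecidableEq α] (S : Finset α) (K : ℕ)
    (hK : 0 < K) {x : α} (hx : x ∈ S) :
    ((powersetCard K S).filter (fun T => x ∈ T)).card = (S.card - 1).choose (K - 1) := by
  rw [← card_erase_of_mem hx, ← card_powersetCard (K - 1) (S.erase x)]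
  apply Finset.card_bij (fun T _ => T.erase x)
  · intro T hT
    simp only [mem_filter, mem_powersetCard] at hT
    simp only [mem_powersetCard]
    refine ⟨erase_subset_erase _ hT.1.1, ?_⟩
    rw [card_erase_of_mem hT.2, hT.1.2]
  · intro T hT T' hT' hE
    simp only [mem_filter] at hT hT'
    rw [← insert_erase hT.2, ← insert_erase hT'.2, hE]
  · intro T hT
    simp only [mem_powersetCard] at hT
    refine ⟨insert x T, ?_, ?_⟩
    · simp only [mem_filter, mem_powersetCard, mem_insert, true_or, and_true]
      have hxT : x ∉ T := fun hxt => (notMem_erase x S) (hT.1 hxt)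
      refine ⟨insert_subset hx (hT.1.trans (erase_subset _ _)), ?_⟩
      rw [card_insert_of_notMem hxT, hT.2]
      omega
    · rw [erase_insert (fun hxt => (notMem_erase x S) (hT.1 hxt))]

lemma sum_edgeCount {N D M : ℕ} (E : Fin N × Fin D → Fin M)
    (S : Finset (Fin N)) (Y : Finset (Fin M)) (K : ℕ) (hK : 0 < K) :
    ∑ T ∈ powersetCard K S, edgeCount E T Y
      = (S.card - 1).choose (K - 1) * edgeCount E S Y := by
  have hsub : ∀ T ∈ powersetCard K S, T ⊆ S := fun T hT => (mem_powersetCard.1 hT).1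
  simp only [edgeCount_eq_sum]
  calc ∑ T ∈ powersetCard K S, ∑ x ∈ T, (univ.filter (fun i => E (x, i) ∈ Y)).card
      = ∑ T ∈ powersetCard K S, ∑ x ∈ S,
          (if x ∈ T then (univ.filter (fun i => E (x, i) ∈ Y)).card else 0) := by
        refine Finset.sum_congr rfl fun T hT => ?_
        rw [Finset.sum_ite_mem, (Finset.inter_eq_right).2 (hsub T hT)]
    _ = ∑ x ∈ S, ∑ T ∈ powersetCard K S,
          (if x ∈ T then (univ.filter (fun i => E (x, i) ∈ Y)).card else 0) :=
        Finset.sum_comm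
    _ = ∑ x ∈ S, (S.card - 1).choose (K - 1) * (univ.filter (fun i => E (x, i) ∈ Y)).card := by
        refine Finset.sum_congr rfl fun x hx => ?_
        rw [Finset.sum_ite, Finset.sum_const_zero, add_zero, Finset.sum_const,
          card_filter_mem_powersetCard S K hK hx, smul_eq_mul]
    _ = _ := by rw [← Finset.mul_sum]

def IsExtractor {N D M : ℕ} (E : Fin N × Fin D → Fin M) (K : ℕ) (ε : ℝ) : Prop :=
  ∀ (S : Finset (Fin N)) (Y : Finset (Fin M)), K ≤ S.card →
    |(edgeCount E S Y : ℝ) / (D * S.card) - (Y.card : ℝ) / M| < ε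

/-- If the extractor inequality holds for every set `S` of left vertices of
size exactly `K` (and every set `Y` of right vertices), then it holds for
every `S` with `#S ≥ K`, i.e. `E` is a `(K, ε)`-extractor. -/
theorem isExtractor_of_eq_card {N D M : ℕ} (E : Fin N × Fin D → Fin M)
    (K : ℕ) (ε : ℝ) (hK : 0 < K) (hKN : K ≤ N)
    (h : ∀ (S : Finset (Fin N)) (Y : Finset (Fin M)), S.card = K →
      |(edgeCount E S Y : ℝ) / (D * S.card) - (Y.card : ℝ) / M| < ε) :
    IsExtractor E K ε := by
  intro S Y hKS
  set s := S.card with hs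
  have hs0 : 0 < s := lt_of_lt_of_le hK hKS
  set c : ℕ := s.choose K with hc
  set c1 : ℕ := (s - 1).choose (K - 1) with hc1
  have hc0 : 0 < c := Nat.choose_pos hKS
  have hkey : c1 * s = c * K := by
    have h1 : s - 1 + 1 = s := Nat.sub_add_cancel hs0
    have h2 : K - 1 + 1 = K := Nat.sub_add_cancel hK
    have := Nat.add_one_mul_choose_eq (s - 1) (K - 1)
    simp only [Nat.succ_eq_add_one, h1, h2] at this
    rw [hc1, hc, mul_comm]
    exact this
  have hP : (powersetCard K S).Nonempty := powersetCard_nonempty.2 hKS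
  have hcard : (powersetCard K S).card = c := card_powersetCard K S
  -- key identity over the reals
  have hfrac : (c : ℝ) / (D * s) = (c1 : ℝ) / (D * K) := by
    have h1 : (c : ℝ) / s = (c1 : ℝ) / K := by
      rw [div_eq_div_iff (by exact_mod_cast hs0.ne') (by exact_mod_cast hK.ne')]
      exact_mod_cast hkey.symm
    rw [mul_comm (D:ℝ) (s:ℝ), mul_comm (D:ℝ) (K:ℝ), ← div_div, ← div_div, h1]
  have hsum : (c : ℝ) * ((edgeCount E S Y : ℝ) / (D * s) - (Y.card : ℝ) / M)
      = ∑ T ∈ powersetCard K S, ((edgeCount E T Y : ℝ) / (D * K) - (Y.card : ℝ) / M) := by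
    rw [Finset.sum_sub_distrib, ← Finset.sum_div, Finset.sum_const, hcard]
    have : ∑ T ∈ powersetCard K S, (edgeCount E T Y : ℝ) = (c1 : ℝ) * edgeCount E S Y := by
      rw [← Nat.cast_sum]
      exact_mod_cast congrArg (Nat.cast : ℕ → ℝ) (sum_edgeCount E S Y K hK)
    rw [this, mul_sub, nsmul_eq_mul]
    congr 1
    calc (c:ℝ) * ((edgeCount E S Y : ℝ) / (D * s))
        = (edgeCount E S Y : ℝ) * ((c:ℝ) / (D * s)) := by ring
      _ = (edgeCount E S Y : ℝ) * ((c1:ℝ) / (D * K)) := by rw [hfrac]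
      _ = (c1:ℝ) * (edgeCount E S Y : ℝ) / (D * K) := by ring
  have habs : |(c : ℝ) * ((edgeCount E S Y : ℝ) / (D * s) - (Y.card : ℝ) / M)| < c * ε := by
    rw [hsum]
    calc |∑ T ∈ powersetCard K S, ((edgeCount E T Y : ℝ) / (D * K) - (Y.card : ℝ) / M)|
        ≤ ∑ T ∈ powersetCard K S, |(edgeCount E T Y : ℝ) / (D * K) - (Y.card : ℝ) / M| :=
          Finset.abs_sum_le_sum_abs _ _
      _ < ∑ _T ∈ powersetCard K S, ε := by
          refine Finset.sum_lt_sum_of_nonempty hP fun T hT => ?_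
          have hTcard := (mem_powersetCard.1 hT).2
          have := h T Y hTcard
          rwa [hTcard] at this
      _ = c * ε := by rw [Finset.sum_const, hcard, nsmul_eq_mul]
  rw [abs_mul, abs_of_nonneg (by positivity : (0:ℝ) ≤ (c:ℝ))] at habs
  have hcR : (0:ℝ) < c := by exact_mod_cast hc0
  exact lt_of_mul_lt_mul_left habs (le_of_lt hcR)
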